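/- Let R be a commutative ring, let A be an R-algebra which is the fiber product Ā ×_{B̄} B of R-algebras along surjections p̄ : Ā ↠ B̄ and q : B → B̄, with p : A → B the projection. If B and B̄ are flat R-modules, then for every maximal ideal m of R the square obtained by tensoring with R/m is again cartesian; equivalently, the induced map A ⊗_R R/m → (Ā ⊗_R R/m) ×_{B̄ ⊗_R R/m} (B ⊗_R R/m) is an isomorphism. -/
import Mathlib

open TensorProduct

/-- `Algebra.TensorProduct.map f id` agrees with `rTensor`. -/
private lemma mapEq' {R C D k : Type*} [CommRing R] [CommRing C] [CommRing D] [CommRing k]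
    [Algebra R C] [Algebra R D] [Algebra R k] (f : C →ₐ[R] D) (x : C ⊗[R] k) :
    Algebra.TensorProduct.map f (AlgHom.id R k) x = LinearMap.rTensor k f.toLinearMap x := by
  induction x with
  | zero => simp
  | tmul a b => simp
  | add a b ha hb => simp [ha, hb]

open LinearMap in
/-- If the cokernel of a surjection is flat, tensoring the kernel inclusion stays injective. -/
private lemma ker_rTensor_injective' {R M N : Type*} [CommRing R] [AddCommGroup M] [Module R M]
    [AddCommGroup N] [Module R N] [Module.Flat R N] (f : M →ₗ[R] N)
    (hf : Function.Surjective f) (m : Ideal R) :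
    Function.Injective ((LinearMap.ker f).subtype.rTensor (R ⧸ m)) := by
  have h := lTensor_injective_of_exact_of_exact_of_rTensor_injective (R := R)
    (f₁ := m.subtype) (f₂ := m.mkQ) (g₁ := (LinearMap.ker f).subtype) (g₂ := f)
    (LinearMap.exact_subtype_mkQ m) (Submodule.mkQ_surjective m)
    (LinearMap.exact_subtype_ker_map f) hf
    (Module.Flat.rTensor_preserves_injective_linearMap _ (Submodule.injective_subtype m))
    (Module.Flat.lTensor_preserves_injective_linearMap _ (Submodule.injective_subtype _))
  rw [← comm_comp_rTensor_comp_comm_eq] at h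
  intro x y hxy
  have h2 := h (a₁ := (TensorProduct.comm R (R ⧸ m) _).symm x)
    (a₂ := (TensorProduct.comm R (R ⧸ m) _).symm y) ?_
  · exact (TensorProduct.comm R (R ⧸ m) _).symm.injective h2
  · simp only [LinearMap.coe_comp, Function.comp_apply, LinearEquiv.coe_coe,
      LinearEquiv.apply_symm_apply]
    exact congrArg _ hxy

set_option maxHeartbeats 1000000 in
/-- Let `A` be an `R`-algebra which is the fiber product `Ā ×_{B̄} B` along a surjection
`p̄ : Ā ↠ B̄` and `q : B → B̄` (cartesianness expressed by saying that `a ↦ (ψ a, p a)` is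
injective with image the fiber-product set), with the projection `p : A → B` surjective.
If `B` and `B̄` are flat `R`-modules, then for every maximal ideal `m ⊂ R` the square
obtained by tensoring with `R/m` is again cartesian. -/
theorem stmt_2 {R A A' B B' : Type*} [CommRing R]
    [CommRing A] [CommRing A'] [CommRing B] [CommRing B']
    [Algebra R A] [Algebra R A'] [Algebra R B] [Algebra R B']
    (ψ : A →ₐ[R] A') (p : A →ₐ[R] B) (p' : A' →ₐ[R] B') (q : B →ₐ[R] B')
    (hcomm : q.comp p = p'.comp ψ)
    (hp' : Function.Surjective p') (hp : Function.Surjective p)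
    (hcart : Function.Injective (fun a : A => (ψ a, p a)) ∧
      Set.range (fun a : A => (ψ a, p a)) = {x : A' × B | p' x.1 = q x.2})
    [Module.Flat R B] [Module.Flat R B']
    (m : Ideal R) (hm : m.IsMaximal) :
    Function.Injective (fun x : A ⊗[R] (R ⧸ m) =>
      (Algebra.TensorProduct.map ψ (AlgHom.id R (R ⧸ m)) x,
        Algebra.TensorProduct.map p (AlgHom.id R (R ⧸ m)) x)) ∧
    Set.range (fun x : A ⊗[R] (R ⧸ m) =>
      (Algebra.TensorProduct.map ψ (AlgHom.id R (R ⧸ m)) x,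
        Algebra.TensorProduct.map p (AlgHom.id R (R ⧸ m)) x)) =
      {z : (A' ⊗[R] (R ⧸ m)) × (B ⊗[R] (R ⧸ m)) |
        Algebra.TensorProduct.map p' (AlgHom.id R (R ⧸ m)) z.1 =
          Algebra.TensorProduct.map q (AlgHom.id R (R ⧸ m)) z.2} := by
  obtain ⟨hinj, hrange⟩ := hcart
  -- the kernels of `p` and `p'`
  set K : Submodule R A := LinearMap.ker p.toLinearMap with hK
  set K' : Submodule R A' := LinearMap.ker p'.toLinearMap with hK'
  have hcomm' : ∀ a : A, q (p a) = p' (ψ a) := fun a => AlgHom.congr_fun hcomm a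
  have hres : ∀ x ∈ K, ψ.toLinearMap x ∈ K' := by
    intro x hx
    have hx0 : p x = 0 := hx
    simp only [hK', LinearMap.mem_ker, AlgHom.toLinearMap_apply, ← hcomm' x, hx0, map_zero]
  -- `ψ` restricts to an isomorphism `K ≃ K'`
  have hbij : Function.Bijective (ψ.toLinearMap.restrict hres) := by
    constructor
    · intro x y hxy
      have h1 : ψ (x : A) = ψ (y : A) := congrArg Subtype.val hxy
      have h2 : p (x : A) = p (y : A) := by
        have hx : p (x : A) = 0 := x.2
        have hy : p (y : A) = 0 := y.2
        rw [hx, hy]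
      exact Subtype.ext (hinj (Prod.ext h1 h2))
    · intro x'
      have hx' : ((x' : A'), (0 : B)) ∈ {x : A' × B | p' x.1 = q x.2} := by
        have : p' (x' : A') = 0 := x'.2
        simp [Set.mem_setOf_eq, this]
      rw [← hrange] at hx'
      obtain ⟨a, ha⟩ := hx'
      have ha1 : ψ a = (x' : A') := congrArg Prod.fst ha
      have ha2 : p a = 0 := congrArg Prod.snd ha
      refine ⟨⟨a, ha2⟩, Subtype.ext ?_⟩
      simpa [LinearMap.restrict_apply] using ha1
  set e : K ≃ₗ[R] K' := LinearEquiv.ofBijective (ψ.toLinearMap.restrict hres) hbij with he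
  have hecomp : K'.subtype ∘ₗ (e : K →ₗ[R] K') = ψ.toLinearMap ∘ₗ K.subtype := by
    ext x
    simp [he, LinearMap.restrict_apply]
  -- tensored maps
  have hψsub : (ψ.toLinearMap.rTensor (R ⧸ m)) ∘ₗ (K.subtype.rTensor (R ⧸ m)) =
      (K'.subtype.rTensor (R ⧸ m)) ∘ₗ ((e : K →ₗ[R] K').rTensor (R ⧸ m)) := by
    rw [← LinearMap.rTensor_comp, ← LinearMap.rTensor_comp, hecomp]
  have hcommT : (q.toLinearMap.rTensor (R ⧸ m)) ∘ₗ (p.toLinearMap.rTensor (R ⧸ m)) =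
      (p'.toLinearMap.rTensor (R ⧸ m)) ∘ₗ (ψ.toLinearMap.rTensor (R ⧸ m)) := by
    rw [← LinearMap.rTensor_comp, ← LinearMap.rTensor_comp, ← AlgHom.comp_toLinearMap,
      ← AlgHom.comp_toLinearMap, hcomm]
  have hexact : Function.Exact (K.subtype.rTensor (R ⧸ m)) (p.toLinearMap.rTensor (R ⧸ m)) :=
    rTensor_exact (R ⧸ m) (LinearMap.exact_subtype_ker_map p.toLinearMap) hp
  have hexact' : Function.Exact (K'.subtype.rTensor (R ⧸ m)) (p'.toLinearMap.rTensor (R ⧸ m)) :=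
    rTensor_exact (R ⧸ m) (LinearMap.exact_subtype_ker_map p'.toLinearMap) hp'
  have hι' : Function.Injective (K'.subtype.rTensor (R ⧸ m)) :=
    ker_rTensor_injective' p'.toLinearMap hp' m
  have heT : Function.Bijective ((e : K →ₗ[R] K').rTensor (R ⧸ m)) := by
    have : ((e : K →ₗ[R] K').rTensor (R ⧸ m)) = (e.rTensor (R ⧸ m) : K ⊗[R] (R ⧸ m) →ₗ[R] _) := by
      rfl
    rw [this]
    exact (e.rTensor (R ⧸ m)).bijective
  constructor
  -- injectivity
  · intro x y hxy
    simp only [mapEq', Prod.mk.injEq] at hxy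
    obtain ⟨h1, h2⟩ := hxy
    have hd2 : (p.toLinearMap.rTensor (R ⧸ m)) (x - y) = 0 := by
      rw [map_sub, h2, sub_self]
    obtain ⟨ξ, hξ⟩ := (hexact _).mp hd2
    have hd1 : (K'.subtype.rTensor (R ⧸ m)) (((e : K →ₗ[R] K').rTensor (R ⧸ m)) ξ) = 0 := by
      rw [← LinearMap.comp_apply, ← hψsub, LinearMap.comp_apply, hξ, map_sub, h1, sub_self]
    have h3 : ((e : K →ₗ[R] K').rTensor (R ⧸ m)) ξ = 0 :=
      hι' (hd1.trans (map_zero (K'.subtype.rTensor (R ⧸ m))).symm)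
    have hξ0 : ξ = 0 :=
      heT.injective (h3.trans (map_zero ((e : K →ₗ[R] K').rTensor (R ⧸ m))).symm)
    have hxy0 : x - y = 0 := by rw [← hξ, hξ0, map_zero]
    exact sub_eq_zero.mp hxy0
  -- the image is the fiber product
  · refine Set.ext fun z => ?_
    obtain ⟨x, y⟩ := z
    simp only [Set.mem_range, Set.mem_setOf_eq, mapEq', Prod.mk.injEq]
    constructor
    · rintro ⟨a, rfl, rfl⟩
      simpa using (LinearMap.congr_fun hcommT.symm a)
    · intro hz
      obtain ⟨a, ha⟩ := p.toLinearMap.rTensor_surjective (R ⧸ m) hp y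
      have h0 : (p'.toLinearMap.rTensor (R ⧸ m)) (x - ψ.toLinearMap.rTensor (R ⧸ m) a) = 0 := by
        have hqa : (p'.toLinearMap.rTensor (R ⧸ m)) (ψ.toLinearMap.rTensor (R ⧸ m) a)
            = (q.toLinearMap.rTensor (R ⧸ m)) ((p.toLinearMap.rTensor (R ⧸ m)) a) := by
          simpa using (LinearMap.congr_fun hcommT a).symm
        rw [map_sub, hqa, ha, hz, sub_self]
      obtain ⟨ξ', hξ'⟩ := (hexact' _).mp h0
      obtain ⟨ζ, rfl⟩ := heT.surjective ξ'
      refine ⟨a + (K.subtype.rTensor (R ⧸ m)) ζ, ?_, ?_⟩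
      · rw [map_add]
        have hψζ : (ψ.toLinearMap.rTensor (R ⧸ m)) ((K.subtype.rTensor (R ⧸ m)) ζ)
            = (K'.subtype.rTensor (R ⧸ m)) (((e : K →ₗ[R] K').rTensor (R ⧸ m)) ζ) := by
          simpa using (LinearMap.congr_fun hψsub ζ)
        rw [hψζ, hξ']
        ring
      · rw [map_add, ha]
        have hpζ : (p.toLinearMap.rTensor (R ⧸ m)) ((K.subtype.rTensor (R ⧸ m)) ζ) = 0 :=
          hexact.apply_apply_eq_zero ζ
        rw [hpζ, add_zero]
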